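/- arXiv:0711.0681 — 3 statements merged into one kernel-verified Lean document; each statement's English description precedes it below -/
import Mathlib

section
/- Let σ : ℝ × ℝ → ℝ be nonnegative and measurable, and let f : ℝ³ → ℝ be positive and measurable. Define Γ = -∫_{r>0} ∫_{S²} ∫_{S²} σ(r², ω·e) r³ [f(r ω) - f(r e)] ln(f(r e)) dω de dr (assuming integrability). Then Γ = (1/2) ∫∫∫ σ(r², ω·e) r³ (f(r ω) - f(r e)) ln(f(r ω)/f(r e)) dω de dr, and hence Γ ≥ 0. Moreover, if σ is strictly positive then Γ = 0 implies that f(r ω) = f(r e) for almost every r > 0 and ω, e ∈ S², i.e., f is isotropic. -/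
open MeasureTheory Metric

/-!
Swapping the directions `ω ↔ e` preserves the measure and the weight `σ(r², ω·e) r³`, and
turns the integrand `[f(rω) - f(re)] ln f(re)` into `[f(re) - f(rω)] ln f(rω)`. Averaging
the two resulting expressions for `Γ` gives the integrand
`σ r³ (f(rω) - f(re)) ln(f(rω)/f(re))`, which is nonnegative because `ln` is increasing, and
vanishes only where `f(rω) = f(re)`.
-/

namespace Real

theorem sub_mul_log_div_nonneg {a b : ℝ} (ha : 0 < a) (hb : 0 < b) :
    0 ≤ (a - b) * log (a / b) := by
  rcases le_total b a with hba | hab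
  · exact mul_nonneg (sub_nonneg.2 hba) (log_nonneg ((one_le_div hb).2 hba))
  · exact mul_nonneg_of_nonpos_of_nonpos (sub_nonpos.2 hab)
      (log_nonpos (div_nonneg ha.le hb.le) ((div_le_one hb).2 hab))

theorem sub_mul_log_div_eq_zero_iff {a b : ℝ} (ha : 0 < a) (hb : 0 < b) :
    (a - b) * log (a / b) = 0 ↔ a = b := by
  refine ⟨fun h => ?_, fun h => by rw [h, sub_self, zero_mul]⟩
  rcases mul_eq_zero.1 h with h | h
  · exact sub_eq_zero.1 h
  · exact (div_eq_one_iff_eq hb.ne').1 (eq_one_of_pos_of_log_eq_zero (div_pos ha hb) h)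

theorem mul_sub_mul_log_div_nonneg {w a b : ℝ} (hw : 0 ≤ w) (ha : 0 < a) (hb : 0 < b) :
    0 ≤ w * (a - b) * log (a / b) := by
  rw [mul_assoc]
  exact mul_nonneg hw (sub_mul_log_div_nonneg ha hb)

end Real

section Symmetrization

variable {α β : Type*} [MeasurableSpace α] [MeasurableSpace β]
  {ρ : Measure α} {μ : Measure β}

theorem integral_prod_prod_eq_integral_integral_integral {γ : Type*} [MeasurableSpace γ]
    {ν : Measure γ} [SFinite ρ] [SFinite μ] [SFinite ν] {F : α × β × γ → ℝ}
    (hF : Integrable F (ρ.prod (μ.prod ν))) :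
    ∫ p, F p ∂ρ.prod (μ.prod ν) = ∫ r, ∫ x, ∫ y, F (r, x, y) ∂ν ∂μ ∂ρ := by
  rw [integral_prod _ hF]
  refine integral_congr_ae ?_
  filter_upwards [hF.prod_right_ae] with r hr
  exact integral_prod _ hr

variable [SFinite ρ] [SFinite μ] {w : α → β → β → ℝ} {g : α → β → ℝ}

theorem neg_integral_mul_sub_mul_log_eq_half_integral_mul_sub_mul_log_div
    (hw : ∀ r x y, w r x y = w r y x) (hg : ∀ r x, 0 < g r x)
    (hint : Integrable (fun p : α × β × β =>
      w p.1 p.2.1 p.2.2 * (g p.1 p.2.1 - g p.1 p.2.2) * Real.log (g p.1 p.2.2))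
      (ρ.prod (μ.prod μ))) :
    -∫ p, w p.1 p.2.1 p.2.2 * (g p.1 p.2.1 - g p.1 p.2.2) * Real.log (g p.1 p.2.2)
        ∂ρ.prod (μ.prod μ) =
      (1 / 2) * ∫ p, w p.1 p.2.1 p.2.2 * (g p.1 p.2.1 - g p.1 p.2.2) *
        Real.log (g p.1 p.2.1 / g p.1 p.2.2) ∂ρ.prod (μ.prod μ) := by
  set G := fun p : α × β × β =>
    w p.1 p.2.1 p.2.2 * (g p.1 p.2.1 - g p.1 p.2.2) * Real.log (g p.1 p.2.2)
  set E : α × β × β ≃ᵐ α × β × β :=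
    (MeasurableEquiv.refl α).prodCongr MeasurableEquiv.prodComm
  have hE : MeasurePreserving E (ρ.prod (μ.prod μ)) (ρ.prod (μ.prod μ)) :=
    (MeasurePreserving.id ρ).prod Measure.measurePreserving_swap
  have hint_swap : Integrable (G ∘ E) (ρ.prod (μ.prod μ)) :=
    (hE.integrable_comp_emb E.measurableEmbedding).2 hint
  have hswap : ∫ p, G (E p) ∂ρ.prod (μ.prod μ) = ∫ p, G p ∂ρ.prod (μ.prod μ) :=
    hE.integral_comp' G
  have hsymm : ∀ p, w p.1 p.2.1 p.2.2 * (g p.1 p.2.1 - g p.1 p.2.2) *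
      Real.log (g p.1 p.2.1 / g p.1 p.2.2) = -G p - G (E p) := by
    rintro ⟨r, x, y⟩
    change _ = -G (r, x, y) - G (r, y, x)
    simp only [G]
    rw [Real.log_div (hg r x).ne' (hg r y).ne', hw r y x]
    ring
  simp_rw [hsymm]
  rw [integral_sub (f := fun p => -G p) (g := fun p => G (E p)) hint.neg hint_swap,
    integral_neg, hswap]
  ring

end Symmetrization

section Positivity

variable {X : Type*} [MeasurableSpace X] {ν : Measure X} {w a b : X → ℝ}

theorem integral_mul_sub_mul_log_div_nonneg (hw : 0 ≤ᵐ[ν] w) (ha : ∀ x, 0 < a x)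
    (hb : ∀ x, 0 < b x) : 0 ≤ ∫ x, w x * (a x - b x) * Real.log (a x / b x) ∂ν := by
  refine integral_nonneg_of_ae ?_
  filter_upwards [hw] with x hwx using Real.mul_sub_mul_log_div_nonneg hwx (ha x) (hb x)

theorem ae_eq_of_integral_mul_sub_mul_log_div_eq_zero (hw : ∀ᵐ x ∂ν, 0 < w x)
    (ha : ∀ x, 0 < a x) (hb : ∀ x, 0 < b x)
    (hint : Integrable (fun x => w x * (a x - b x) * Real.log (a x / b x)) ν)
    (h : ∫ x, w x * (a x - b x) * Real.log (a x / b x) ∂ν = 0) : a =ᵐ[ν] b := by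
  have hnonneg : 0 ≤ᵐ[ν] fun x => w x * (a x - b x) * Real.log (a x / b x) := by
    filter_upwards [hw] with x hwx using Real.mul_sub_mul_log_div_nonneg hwx.le (ha x) (hb x)
  filter_upwards [hw, (integral_eq_zero_iff_of_nonneg_ae hnonneg hint).1 h] with x hwx hx
  rw [Pi.zero_apply, mul_assoc, mul_eq_zero, or_iff_right hwx.ne'] at hx
  exact (Real.sub_mul_log_div_eq_zero_iff (ha x) (hb x)).1 hx

end Positivity

theorem entropy_production_symmetrization_general
    (σ : ℝ → ℝ → ℝ)
    (hσ_nonneg : ∀ x y, 0 ≤ σ x y)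
    (f : EuclideanSpace ℝ (Fin 3) → ℝ)
    (hf_pos : ∀ x, 0 < f x)
    (μS : Measure (sphere (0 : EuclideanSpace ℝ (Fin 3)) 1))
    (hμS : μS = (volume : Measure (EuclideanSpace ℝ (Fin 3))).toSphere)
    (h_int1 : Integrable
      (fun p : ℝ × (sphere (0 : EuclideanSpace ℝ (Fin 3)) 1 ×
          sphere (0 : EuclideanSpace ℝ (Fin 3)) 1) =>
        σ (p.1 ^ 2) (inner ℝ (p.2.1 : EuclideanSpace ℝ (Fin 3)) (p.2.2 : EuclideanSpace ℝ (Fin 3))) *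
          p.1 ^ 3 *
          (f (p.1 • (p.2.1 : EuclideanSpace ℝ (Fin 3))) -
            f (p.1 • (p.2.2 : EuclideanSpace ℝ (Fin 3)))) *
          Real.log (f (p.1 • (p.2.2 : EuclideanSpace ℝ (Fin 3)))))
      ((volume.restrict (Set.Ioi (0 : ℝ))).prod (μS.prod μS)))
    (h_int2 : Integrable
      (fun p : ℝ × (sphere (0 : EuclideanSpace ℝ (Fin 3)) 1 ×
          sphere (0 : EuclideanSpace ℝ (Fin 3)) 1) =>
        σ (p.1 ^ 2) (inner ℝ (p.2.1 : EuclideanSpace ℝ (Fin 3)) (p.2.2 : EuclideanSpace ℝ (Fin 3))) *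
          p.1 ^ 3 *
          (f (p.1 • (p.2.1 : EuclideanSpace ℝ (Fin 3))) -
            f (p.1 • (p.2.2 : EuclideanSpace ℝ (Fin 3)))) *
          Real.log (f (p.1 • (p.2.1 : EuclideanSpace ℝ (Fin 3))) /
            f (p.1 • (p.2.2 : EuclideanSpace ℝ (Fin 3)))))
      ((volume.restrict (Set.Ioi (0 : ℝ))).prod (μS.prod μS)))
    (Γ : ℝ)
    (hΓ : Γ = -(∫ r in Set.Ioi (0 : ℝ), ∫ ω, ∫ e,
        σ (r ^ 2) (inner ℝ (ω : EuclideanSpace ℝ (Fin 3)) (e : EuclideanSpace ℝ (Fin 3))) *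
          r ^ 3 *
          (f (r • (ω : EuclideanSpace ℝ (Fin 3))) - f (r • (e : EuclideanSpace ℝ (Fin 3)))) *
          Real.log (f (r • (e : EuclideanSpace ℝ (Fin 3))))
        ∂μS ∂μS)) :
    Γ = (1 / 2) * (∫ r in Set.Ioi (0 : ℝ), ∫ ω, ∫ e,
        σ (r ^ 2) (inner ℝ (ω : EuclideanSpace ℝ (Fin 3)) (e : EuclideanSpace ℝ (Fin 3))) *
          r ^ 3 *
          (f (r • (ω : EuclideanSpace ℝ (Fin 3))) - f (r • (e : EuclideanSpace ℝ (Fin 3)))) *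
          Real.log (f (r • (ω : EuclideanSpace ℝ (Fin 3))) /
            f (r • (e : EuclideanSpace ℝ (Fin 3))))
        ∂μS ∂μS) ∧
    0 ≤ Γ ∧
    ((∀ x y, 0 < σ x y) → Γ = 0 →
      ∀ᵐ p : ℝ × (sphere (0 : EuclideanSpace ℝ (Fin 3)) 1 ×
          sphere (0 : EuclideanSpace ℝ (Fin 3)) 1)
        ∂((volume.restrict (Set.Ioi (0 : ℝ))).prod (μS.prod μS)),
        f (p.1 • (p.2.1 : EuclideanSpace ℝ (Fin 3))) =
          f (p.1 • (p.2.2 : EuclideanSpace ℝ (Fin 3)))) := by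
  have : IsFiniteMeasure μS := hμS ▸ inferInstance
  have hr_pos : ∀ᵐ p ∂(volume.restrict (Set.Ioi (0 : ℝ))).prod (μS.prod μS), 0 < p.1 :=
    Measure.quasiMeasurePreserving_fst.ae (ae_restrict_mem measurableSet_Ioi)
  have hG := integral_prod_prod_eq_integral_integral_integral h_int1
  have hK := integral_prod_prod_eq_integral_integral_integral h_int2
  dsimp only at hG hK
  rw [← hG] at hΓ
  rw [← hK]
  have hΓK : Γ = _ := hΓ.trans <|
    neg_integral_mul_sub_mul_log_eq_half_integral_mul_sub_mul_log_div
      (w := fun r (ω e : sphere (0 : EuclideanSpace ℝ (Fin 3)) 1) =>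
        σ (r ^ 2) (inner ℝ (ω : EuclideanSpace ℝ (Fin 3)) e) * r ^ 3)
      (g := fun r (ω : sphere (0 : EuclideanSpace ℝ (Fin 3)) 1) =>
        f (r • (ω : EuclideanSpace ℝ (Fin 3))))
      (fun r ω e => by rw [real_inner_comm]) (fun _ _ => hf_pos _) h_int1
  have hw_nonneg : ∀ᵐ p ∂(volume.restrict (Set.Ioi (0 : ℝ))).prod (μS.prod μS),
      0 ≤ σ (p.1 ^ 2) (inner ℝ (p.2.1 : EuclideanSpace ℝ (Fin 3)) p.2.2) * p.1 ^ 3 := by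
    filter_upwards [hr_pos] with p hp using mul_nonneg (hσ_nonneg _ _) (by positivity)
  refine ⟨hΓK, hΓK ▸ mul_nonneg (by norm_num)
    (integral_mul_sub_mul_log_div_nonneg hw_nonneg (fun _ => hf_pos _) (fun _ => hf_pos _)),
    fun hσ_pos hΓ_eq_zero => ?_⟩
  refine ae_eq_of_integral_mul_sub_mul_log_div_eq_zero ?_ (fun _ => hf_pos _)
    (fun _ => hf_pos _) h_int2 (by linarith)
  filter_upwards [hr_pos] with p hp using mul_pos (hσ_pos _ _) (by positivity)

/-- Zero-order entropy production in electron–heavy-particle collisions: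
`Γ = -∫∫∫ σ(r², ω·e) r³ [f(rω) - f(re)] ln(f(re))` equals the symmetrized form
`(1/2)∫∫∫ σ(r², ω·e) r³ (f(rω) - f(re)) ln(f(rω)/f(re))`, hence `Γ ≥ 0`; if `σ` is
strictly positive, `Γ = 0` forces `f(rω) = f(re)` almost everywhere, i.e. `f` isotropic. -/
theorem entropy_production_symmetrization
    (σ : ℝ → ℝ → ℝ) (hσ_meas : Measurable (Function.uncurry σ))
    (hσ_nonneg : ∀ x y, 0 ≤ σ x y)
    (f : EuclideanSpace ℝ (Fin 3) → ℝ) (hf_meas : Measurable f)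
    (hf_pos : ∀ x, 0 < f x)
    (μS : Measure (sphere (0 : EuclideanSpace ℝ (Fin 3)) 1))
    (hμS : μS = (volume : Measure (EuclideanSpace ℝ (Fin 3))).toSphere)
    (h_int1 : Integrable
      (fun p : ℝ × (sphere (0 : EuclideanSpace ℝ (Fin 3)) 1 ×
          sphere (0 : EuclideanSpace ℝ (Fin 3)) 1) =>
        σ (p.1 ^ 2) (inner ℝ (p.2.1 : EuclideanSpace ℝ (Fin 3)) (p.2.2 : EuclideanSpace ℝ (Fin 3))) *
          p.1 ^ 3 *
          (f (p.1 • (p.2.1 : EuclideanSpace ℝ (Fin 3))) -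
            f (p.1 • (p.2.2 : EuclideanSpace ℝ (Fin 3)))) *
          Real.log (f (p.1 • (p.2.2 : EuclideanSpace ℝ (Fin 3)))))
      ((volume.restrict (Set.Ioi (0 : ℝ))).prod (μS.prod μS)))
    (h_int2 : Integrable
      (fun p : ℝ × (sphere (0 : EuclideanSpace ℝ (Fin 3)) 1 ×
          sphere (0 : EuclideanSpace ℝ (Fin 3)) 1) =>
        σ (p.1 ^ 2) (inner ℝ (p.2.1 : EuclideanSpace ℝ (Fin 3)) (p.2.2 : EuclideanSpace ℝ (Fin 3))) *
          p.1 ^ 3 *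
          (f (p.1 • (p.2.1 : EuclideanSpace ℝ (Fin 3))) -
            f (p.1 • (p.2.2 : EuclideanSpace ℝ (Fin 3)))) *
          Real.log (f (p.1 • (p.2.1 : EuclideanSpace ℝ (Fin 3))) /
            f (p.1 • (p.2.2 : EuclideanSpace ℝ (Fin 3)))))
      ((volume.restrict (Set.Ioi (0 : ℝ))).prod (μS.prod μS)))
    (Γ : ℝ)
    (hΓ : Γ = -(∫ r in Set.Ioi (0 : ℝ), ∫ ω, ∫ e,
        σ (r ^ 2) (inner ℝ (ω : EuclideanSpace ℝ (Fin 3)) (e : EuclideanSpace ℝ (Fin 3))) *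
          r ^ 3 *
          (f (r • (ω : EuclideanSpace ℝ (Fin 3))) - f (r • (e : EuclideanSpace ℝ (Fin 3)))) *
          Real.log (f (r • (e : EuclideanSpace ℝ (Fin 3))))
        ∂μS ∂μS)) :
    Γ = (1 / 2) * (∫ r in Set.Ioi (0 : ℝ), ∫ ω, ∫ e,
        σ (r ^ 2) (inner ℝ (ω : EuclideanSpace ℝ (Fin 3)) (e : EuclideanSpace ℝ (Fin 3))) *
          r ^ 3 *
          (f (r • (ω : EuclideanSpace ℝ (Fin 3))) - f (r • (e : EuclideanSpace ℝ (Fin 3)))) *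
          Real.log (f (r • (ω : EuclideanSpace ℝ (Fin 3))) /
            f (r • (e : EuclideanSpace ℝ (Fin 3))))
        ∂μS ∂μS) ∧
    0 ≤ Γ ∧
    ((∀ x y, 0 < σ x y) → Γ = 0 →
      ∀ᵐ p : ℝ × (sphere (0 : EuclideanSpace ℝ (Fin 3)) 1 ×
          sphere (0 : EuclideanSpace ℝ (Fin 3)) 1)
        ∂((volume.restrict (Set.Ioi (0 : ℝ))).prod (μS.prod μS)),
        f (p.1 • (p.2.1 : EuclideanSpace ℝ (Fin 3))) =
          f (p.1 • (p.2.2 : EuclideanSpace ℝ (Fin 3)))) :=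
  entropy_production_symmetrization_general σ hσ_nonneg f hf_pos μS hμS h_int1 h_int2 Γ hΓ
end

section
/- Let T > 0, n > 0, M > 0, w ∈ ℝ³ with w ≠ 0, f⁰(C) = n (2π T)^(-3/2) exp(-|C|²/(2T)), and let φ : ℝ³ → ℝ satisfy ∫ f⁰ φ dC = 0 and ∫ f⁰ φ ½|C|² dC = 0. Define δφ²(C) = -(M/T)(C·w) φ(C) + (M²/(2T))(w·w + (C·w)²/T). Writing V = (1/n) ∫ C f⁰(C) φ(C) dC and q = ∫ ½|C|² C f⁰(C) φ(C) dC, one has ∫ f⁰ δφ² dC = (M/T) n w·(M w - V) and ∫ f⁰ δφ² ½|C|² dC = M w·(2 M n w - q/T). Consequently both projections vanish for all admissible φ only when w = 0. -/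
/-!
Only the term `-(M/T) (C·w) φ` of `δφ²` involves `φ`, and it contributes the moments `n V` and
`q` of `f⁰ φ`. The other terms are Gaussian moments of the Maxwellian in `d` dimensions:
`∫ f⁰ = n`, `∫ f⁰ (C·w)² = n T |w|²`, `∫ f⁰ |C|² = d n T` and `∫ f⁰ |C|² (C·w)² = (d+2) n T² |w|²`.
The Maxwellian is `n` times a product of one-dimensional normal densities of variance `T`. So each
of these integrals is a sum of products of the one-dimensional moments `1, 0, T, 0, 3T²`, which
come from integrating by parts. For `d = 3` the two projections are therefore
`(M/T) n w·(Mw - V)` and `M w·(2Mn w - q/T)`. At `V = q = 0` both are positive multiples of `|w|²`.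
-/

open MeasureTheory Real ProbabilityTheory
open scoped NNReal RealInnerProductSpace

lemma prod_pow_single {ι M : Type*} [Fintype ι] [DecidableEq ι] [CommMonoid M] (x : ι → M)
    (i : ι) (a : ℕ) : ∏ l, x l ^ (Pi.single i a : ι → ℕ) l = x i ^ a := by
  simp only [Pi.single_apply, pow_ite, pow_zero, Finset.prod_ite_eq', Finset.mem_univ, if_true]

lemma prod_pow_add {ι M : Type*} [Fintype ι] [CommMonoid M] (x : ι → M) (p q : ι → ℕ) :
    ∏ l, x l ^ (p + q) l = (∏ l, x l ^ p l) * ∏ l, x l ^ q l := by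
  simp only [Pi.add_apply, pow_add, Finset.prod_mul_distrib]

namespace ProbabilityTheory

lemma gaussianPDFReal_zero_apply (v : ℝ≥0) (t : ℝ) :
    gaussianPDFReal 0 v t = (√(2 * π * v))⁻¹ * rexp (-(2 * v : ℝ)⁻¹ * t ^ 2) := by
  rw [gaussianPDFReal, sub_zero, neg_mul, neg_div, div_eq_inv_mul]

lemma hasDerivAt_gaussianPDFReal_zero (v : ℝ≥0) (t : ℝ) :
    HasDerivAt (gaussianPDFReal 0 v) (-(t / v) * gaussianPDFReal 0 v t) t := by
  have h := ((hasDerivAt_pow 2 t).fun_neg.div_const (2 * v : ℝ)).exp.const_mul (√(2 * π * v))⁻¹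
  simp only [gaussianPDFReal_def, sub_zero]
  exact h.congr_deriv (by push_cast; ring)

lemma integrable_pow_mul_gaussianPDFReal (v : ℝ≥0) (k : ℕ) :
    Integrable fun t => t ^ k * gaussianPDFReal 0 v t := by
  rcases eq_or_ne v 0 with rfl | hv
  · simp
  simp_rw [gaussianPDFReal_zero_apply, mul_left_comm _ (√(2 * π * v))⁻¹]
  refine Integrable.const_mul ?_ _
  simpa [Real.rpow_natCast] using integrable_rpow_mul_exp_neg_mul_sq
    (b := (2 * v : ℝ)⁻¹) (by positivity) (s := k) (by linarith [k.cast_nonneg (α := ℝ)])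

noncomputable def gaussianMoment (v : ℝ≥0) (k : ℕ) : ℝ := ∫ t, t ^ k * gaussianPDFReal 0 v t

lemma gaussianMoment_zero {v : ℝ≥0} (hv : v ≠ 0) : gaussianMoment v 0 = 1 := by
  simpa [gaussianMoment] using integral_gaussianPDFReal_eq_one 0 hv

lemma gaussianMoment_of_odd (v : ℝ≥0) {k : ℕ} (hk : Odd k) : gaussianMoment v k = 0 := by
  have h := integral_neg_eq_self (fun t => t ^ k * gaussianPDFReal 0 v t) volume
  simp only [hk.neg_pow, gaussianPDFReal, sub_zero, neg_sq, neg_mul, integral_neg] at h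
  simp only [gaussianMoment, gaussianPDFReal, sub_zero]
  linarith

lemma gaussianMoment_add_two (v : ℝ≥0) (k : ℕ) :
    gaussianMoment v (k + 2) = (k + 1) * v * gaussianMoment v k := by
  rcases eq_or_ne v 0 with rfl | hv
  · simp [gaussianMoment]
  have hderiv (t : ℝ) : HasDerivAt (fun t => t ^ (k + 1) * gaussianPDFReal 0 v t)
      ((k + 1) * (t ^ k * gaussianPDFReal 0 v t) -
        (v : ℝ)⁻¹ * (t ^ (k + 2) * gaussianPDFReal 0 v t)) t := by
    refine ((hasDerivAt_pow (k + 1) t).fun_mul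
      (hasDerivAt_gaussianPDFReal_zero v t)).congr_deriv ?_
    push_cast
    ring
  have hk := integrable_pow_mul_gaussianPDFReal v k
  have hk2 := integrable_pow_mul_gaussianPDFReal v (k + 2)
  have h := integral_eq_zero_of_hasDerivAt_of_integrable hderiv
    ((hk.const_mul _).sub (hk2.const_mul _)) (integrable_pow_mul_gaussianPDFReal v (k + 1))
  rw [integral_sub (hk.const_mul _) (hk2.const_mul _), integral_const_mul,
    integral_const_mul] at h
  have hv' : (v : ℝ) ≠ 0 := by exact_mod_cast hv
  simp only [gaussianMoment]
  field_simp at h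
  linarith

lemma gaussianMoment_two {v : ℝ≥0} (hv : v ≠ 0) : gaussianMoment v 2 = v := by
  simpa [gaussianMoment_zero hv] using gaussianMoment_add_two v 0

lemma gaussianMoment_four {v : ℝ≥0} (hv : v ≠ 0) : gaussianMoment v 4 = 3 * v ^ 2 := by
  rw [gaussianMoment_add_two v 2, gaussianMoment_two hv]
  ring

section Isotropic

variable {ι : Type*} [Fintype ι]

noncomputable def isotropicGaussianPDF (v : ℝ≥0) (x : ι → ℝ) : ℝ :=
  ∏ l, gaussianPDFReal 0 v (x l)

lemma monomial_mul_isotropicGaussianPDF (v : ℝ≥0) (p : ι → ℕ) (x : ι → ℝ) :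
    (∏ l, x l ^ p l) * isotropicGaussianPDF v x = ∏ l, x l ^ p l * gaussianPDFReal 0 v (x l) :=
  Finset.prod_mul_distrib.symm

lemma integrable_monomial_mul_isotropicGaussianPDF (v : ℝ≥0) (p : ι → ℕ) :
    Integrable fun x : ι → ℝ => (∏ l, x l ^ p l) * isotropicGaussianPDF v x := by
  simp_rw [monomial_mul_isotropicGaussianPDF]
  exact Integrable.fintype_prod (f := fun l t => t ^ p l * gaussianPDFReal 0 v t)
    fun l => integrable_pow_mul_gaussianPDFReal v (p l)

lemma integral_monomial_mul_isotropicGaussianPDF (v : ℝ≥0) (p : ι → ℕ) :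
    ∫ x : ι → ℝ, (∏ l, x l ^ p l) * isotropicGaussianPDF v x = ∏ l, gaussianMoment v (p l) := by
  simp_rw [monomial_mul_isotropicGaussianPDF]
  exact integral_fintype_prod_volume_eq_prod fun l t => t ^ p l * gaussianPDFReal 0 v t

lemma prod_gaussianMoment_eq_zero_of_odd (v : ℝ≥0) {p : ι → ℕ} {i : ι} (hp : Odd (p i)) :
    ∏ l, gaussianMoment v (p l) = 0 :=
  Finset.prod_eq_zero (Finset.mem_univ i) (gaussianMoment_of_odd v hp)

variable [DecidableEq ι]

lemma prod_gaussianMoment_single {v : ℝ≥0} (hv : v ≠ 0) (i : ι) (a : ℕ) :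
    ∏ l, gaussianMoment v ((Pi.single i a : ι → ℕ) l) = gaussianMoment v a := by
  rw [Finset.prod_eq_single i (fun l _ hl => by simp [hl, gaussianMoment_zero hv]) (by simp)]
  simp

lemma integrable_mul_mul_isotropicGaussianPDF (v : ℝ≥0) (i j : ι) :
    Integrable fun x : ι → ℝ => x i * x j * isotropicGaussianPDF v x := by
  have h := integrable_monomial_mul_isotropicGaussianPDF v (Pi.single i 1 + Pi.single j 1)
  simp only [prod_pow_add, prod_pow_single, pow_one] at h
  exact h

lemma integral_mul_mul_isotropicGaussianPDF {v : ℝ≥0} (hv : v ≠ 0) (i j : ι) :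
    ∫ x : ι → ℝ, x i * x j * isotropicGaussianPDF v x = if i = j then (v : ℝ) else 0 := by
  have h := integral_monomial_mul_isotropicGaussianPDF v (Pi.single i 1 + Pi.single j 1)
  simp only [prod_pow_add, prod_pow_single, pow_one] at h
  rw [h]
  split_ifs with hij
  · rw [hij, ← Pi.single_add, prod_gaussianMoment_single hv, gaussianMoment_two hv]
  · exact prod_gaussianMoment_eq_zero_of_odd v (i := i) (by simp [Ne.symm hij])

lemma integrable_mul_mul_sq_mul_isotropicGaussianPDF (v : ℝ≥0) (i j k : ι) :
    Integrable fun x : ι → ℝ => x i * x j * x k ^ 2 * isotropicGaussianPDF v x := by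
  have h := integrable_monomial_mul_isotropicGaussianPDF v
    (Pi.single i 1 + Pi.single j 1 + Pi.single k 2)
  simp only [prod_pow_add, prod_pow_single, pow_one] at h
  exact h

lemma integral_mul_mul_sq_mul_isotropicGaussianPDF {v : ℝ≥0} (hv : v ≠ 0) (i j k : ι) :
    ∫ x : ι → ℝ, x i * x j * x k ^ 2 * isotropicGaussianPDF v x =
      if i = j then (if k = i then 3 else 1) * (v : ℝ) ^ 2 else 0 := by
  have h := integral_monomial_mul_isotropicGaussianPDF v
    (Pi.single i 1 + Pi.single j 1 + Pi.single k 2)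
  simp only [prod_pow_add, prod_pow_single, pow_one] at h
  rw [h]
  split_ifs with hij hki
  · subst hij hki
    rw [← Pi.single_add, ← Pi.single_add, prod_gaussianMoment_single hv, gaussianMoment_four hv]
  · subst hij
    rw [Finset.prod_eq_mul i k (Ne.symm hki)
      (fun l _ hl => by simp [hl.1, hl.2, gaussianMoment_zero hv]) (by simp) (by simp)]
    simp [Ne.symm hki, hki, gaussianMoment_two hv]
    ring
  · refine prod_gaussianMoment_eq_zero_of_odd v (i := i) ?_
    by_cases hik : i = k
    · subst hik
      simp [Ne.symm hij]
      decide
    · simp [Ne.symm hij, Ne.symm hik]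

lemma integrable_mul_mul_sum_sq_mul_isotropicGaussianPDF (v : ℝ≥0) (i j : ι) :
    Integrable fun x : ι → ℝ => x i * x j * ((∑ k, x k ^ 2) * isotropicGaussianPDF v x) := by
  simp only [Finset.sum_mul, Finset.mul_sum, ← mul_assoc]
  exact integrable_finsetSum _ fun k _ => integrable_mul_mul_sq_mul_isotropicGaussianPDF v i j k

lemma integral_mul_mul_sum_sq_mul_isotropicGaussianPDF {v : ℝ≥0} (hv : v ≠ 0) (i j : ι) :
    ∫ x : ι → ℝ, x i * x j * ((∑ k, x k ^ 2) * isotropicGaussianPDF v x) =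
      if i = j then (Fintype.card ι + 2) * (v : ℝ) ^ 2 else 0 := by
  simp only [Finset.sum_mul, Finset.mul_sum, ← mul_assoc]
  rw [integral_finsetSum _ fun k _ => integrable_mul_mul_sq_mul_isotropicGaussianPDF v i j k]
  simp only [integral_mul_mul_sq_mul_isotropicGaussianPDF hv]
  split_ifs with hij
  · have hsplit (k : ι) : (if k = i then 3 else 1 : ℝ) * (v : ℝ) ^ 2 =
        (v : ℝ) ^ 2 + if k = i then 2 * (v : ℝ) ^ 2 else 0 := by
      split_ifs <;> ring
    simp only [hsplit, Finset.sum_add_distrib, Finset.sum_ite_eq', Finset.mem_univ, if_true,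
      Finset.sum_const, Finset.card_univ, nsmul_eq_mul]
    ring
  · simp

end Isotropic

end ProbabilityTheory

lemma sum_mul_sq_mul {ι X : Type*} [Fintype ι] (f : ι → X → ℝ) (h : X → ℝ) (w : ι → ℝ)
    (x : X) : (∑ i, w i * f i x) ^ 2 * h x = ∑ i, ∑ j, w i * w j * (f i x * f j x * h x) := by
  rw [sq, Finset.sum_mul_sum, Finset.sum_mul]
  refine Finset.sum_congr rfl fun i _ => ?_
  rw [Finset.sum_mul]
  exact Finset.sum_congr rfl fun j _ => by ring

section QuadraticForm

variable {X ι : Type*} [MeasurableSpace X] {μ : Measure X} [Fintype ι] {f : ι → X → ℝ}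
  {h : X → ℝ}

lemma integrable_sum_mul_sq_mul (hint : ∀ i j, Integrable (fun x => f i x * f j x * h x) μ)
    (w : ι → ℝ) : Integrable (fun x => (∑ i, w i * f i x) ^ 2 * h x) μ := by
  simp only [sum_mul_sq_mul]
  exact integrable_finsetSum _ fun i _ => integrable_finsetSum _ fun j _ => (hint i j).const_mul _

lemma integral_sum_mul_sq_mul [DecidableEq ι]
    (hint : ∀ i j, Integrable (fun x => f i x * f j x * h x) μ) {c : ℝ}
    (horth : ∀ i j, ∫ x, f i x * f j x * h x ∂μ = if i = j then c else 0) (w : ι → ℝ) :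
    ∫ x, (∑ i, w i * f i x) ^ 2 * h x ∂μ = c * ∑ i, w i ^ 2 := by
  simp only [sum_mul_sq_mul]
  have hrow (i : ι) : ∫ x, ∑ j, w i * w j * (f i x * f j x * h x) ∂μ = w i ^ 2 * c := by
    rw [integral_finsetSum _ fun j _ => (hint i j).const_mul _]
    simp only [integral_const_mul, horth, mul_ite, mul_zero, Finset.sum_ite_eq,
      Finset.mem_univ, if_true]
    ring
  rw [integral_finsetSum _ fun i _ => integrable_finsetSum _ fun j _ => (hint i j).const_mul _,
    Finset.sum_congr rfl fun i _ => hrow i, ← Finset.sum_mul, mul_comm]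

end QuadraticForm

section Maxwellian

variable {ι : Type*} [Fintype ι]

noncomputable def maxwellian (n T : ℝ) (C : EuclideanSpace ℝ ι) : ℝ :=
  n * (2 * π * T) ^ (-(Fintype.card ι : ℝ) / 2) * rexp (-‖C‖ ^ 2 / (2 * T))

lemma maxwellian_toLp (n : ℝ) {T : ℝ} (hT : 0 < T) (x : ι → ℝ) :
    maxwellian n T (WithLp.toLp 2 x) = n * isotropicGaussianPDF T.toNNReal x := by
  simp only [maxwellian, isotropicGaussianPDF, gaussianPDFReal, Real.coe_toNNReal _ hT.le,
    sub_zero, Finset.prod_mul_distrib, Finset.prod_const, Finset.card_univ, ← Real.exp_sum,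
    EuclideanSpace.real_norm_sq_eq, ← Finset.sum_div, ← Finset.sum_neg_distrib]
  rw [Real.sqrt_eq_rpow, ← Real.rpow_neg (by positivity), ← Real.rpow_mul_natCast (by positivity)]
  ring_nf

lemma integral_mul_maxwellian (n : ℝ) {T : ℝ} (hT : 0 < T) (g : EuclideanSpace ℝ ι → ℝ) :
    ∫ C, g C * maxwellian n T C =
      n * ∫ x : ι → ℝ, g (WithLp.toLp 2 x) * isotropicGaussianPDF T.toNNReal x := by
  rw [← (PiLp.volume_preserving_toLp ι).integral_comp
    (MeasurableEquiv.toLp 2 _).measurableEmbedding, ← integral_const_mul]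
  simp only [maxwellian_toLp n hT]
  congr 1 with x
  ring

lemma integrable_mul_maxwellian (n : ℝ) {T : ℝ} (hT : 0 < T) {g : EuclideanSpace ℝ ι → ℝ}
    (hg : Integrable fun x : ι → ℝ => g (WithLp.toLp 2 x) * isotropicGaussianPDF T.toNNReal x) :
    Integrable fun C => g C * maxwellian n T C := by
  rw [← (PiLp.volume_preserving_toLp ι).integrable_comp_emb
    (MeasurableEquiv.toLp 2 _).measurableEmbedding]
  simp only [Function.comp_def, maxwellian_toLp n hT, mul_left_comm _ n]
  exact hg.const_mul n

lemma integrable_maxwellian (n : ℝ) {T : ℝ} (hT : 0 < T) :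
    Integrable (maxwellian (ι := ι) n T) := by
  simpa using integrable_mul_maxwellian n hT (g := fun _ => 1)
    (by simpa using integrable_monomial_mul_isotropicGaussianPDF T.toNNReal 0)

lemma integral_maxwellian (n : ℝ) {T : ℝ} (hT : 0 < T) :
    ∫ C, maxwellian (ι := ι) n T C = n := by
  have h := integral_monomial_mul_isotropicGaussianPDF (ι := ι) T.toNNReal 0
  simp only [Pi.zero_apply, pow_zero, Finset.prod_const_one, one_mul,
    gaussianMoment_zero (Real.toNNReal_pos.2 hT).ne'] at h
  simpa [h] using integral_mul_maxwellian n hT (fun _ : EuclideanSpace ℝ ι => (1 : ℝ))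

section Coordinates

variable [DecidableEq ι]

lemma integrable_coord_mul_coord_mul_maxwellian (n : ℝ) {T : ℝ} (hT : 0 < T) (i j : ι) :
    Integrable fun C : EuclideanSpace ℝ ι => C i * C j * maxwellian n T C :=
  integrable_mul_maxwellian n hT (by simpa using integrable_mul_mul_isotropicGaussianPDF _ i j)

lemma integral_coord_mul_coord_mul_maxwellian (n : ℝ) {T : ℝ} (hT : 0 < T) (i j : ι) :
    ∫ C : EuclideanSpace ℝ ι, C i * C j * maxwellian n T C = if i = j then n * T else 0 := by
  rw [integral_mul_maxwellian n hT]
  simp [integral_mul_mul_isotropicGaussianPDF (Real.toNNReal_pos.2 hT).ne', hT.le]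

lemma integrable_coord_mul_coord_mul_norm_sq_mul_maxwellian (n : ℝ) {T : ℝ} (hT : 0 < T)
    (i j : ι) :
    Integrable fun C : EuclideanSpace ℝ ι => C i * C j * (‖C‖ ^ 2 * maxwellian n T C) := by
  simp only [← mul_assoc]
  exact integrable_mul_maxwellian n hT (by
    simpa [EuclideanSpace.real_norm_sq_eq, mul_assoc] using
      integrable_mul_mul_sum_sq_mul_isotropicGaussianPDF _ i j)

lemma integral_coord_mul_coord_mul_norm_sq_mul_maxwellian (n : ℝ) {T : ℝ} (hT : 0 < T)
    (i j : ι) :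
    ∫ C : EuclideanSpace ℝ ι, C i * C j * (‖C‖ ^ 2 * maxwellian n T C) =
      if i = j then (Fintype.card ι + 2) * n * T ^ 2 else 0 := by
  simp only [← mul_assoc]
  rw [integral_mul_maxwellian n hT]
  simp only [EuclideanSpace.real_norm_sq_eq, mul_assoc (_ * _) (∑ _, _)]
  rw [integral_mul_mul_sum_sq_mul_isotropicGaussianPDF (Real.toNNReal_pos.2 hT).ne']
  split_ifs <;> simp [hT.le]
  ring

end Coordinates

lemma inner_eq_sum_mul (C w : EuclideanSpace ℝ ι) : ⟪C, w⟫ = ∑ i, w i * C i := by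
  simp [PiLp.inner_apply]

lemma integrable_inner_sq_mul_maxwellian (n : ℝ) {T : ℝ} (hT : 0 < T) (w : EuclideanSpace ℝ ι) :
    Integrable fun C => ⟪C, w⟫ ^ 2 * maxwellian n T C := by
  classical
  simp only [inner_eq_sum_mul]
  exact integrable_sum_mul_sq_mul (f := fun i (C : EuclideanSpace ℝ ι) => C i)
    (integrable_coord_mul_coord_mul_maxwellian n hT) _

lemma integral_inner_sq_mul_maxwellian (n : ℝ) {T : ℝ} (hT : 0 < T) (w : EuclideanSpace ℝ ι) :
    ∫ C, ⟪C, w⟫ ^ 2 * maxwellian n T C = n * T * ‖w‖ ^ 2 := by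
  classical
  simp only [inner_eq_sum_mul, EuclideanSpace.real_norm_sq_eq]
  exact integral_sum_mul_sq_mul (f := fun i (C : EuclideanSpace ℝ ι) => C i)
    (integrable_coord_mul_coord_mul_maxwellian n hT)
    (integral_coord_mul_coord_mul_maxwellian n hT) _

lemma integrable_inner_sq_mul_norm_sq_mul_maxwellian (n : ℝ) {T : ℝ} (hT : 0 < T)
    (w : EuclideanSpace ℝ ι) :
    Integrable fun C => ⟪C, w⟫ ^ 2 * (‖C‖ ^ 2 * maxwellian n T C) := by
  classical
  simp only [inner_eq_sum_mul]
  exact integrable_sum_mul_sq_mul (f := fun i (C : EuclideanSpace ℝ ι) => C i)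
    (integrable_coord_mul_coord_mul_norm_sq_mul_maxwellian n hT) _

lemma integral_inner_sq_mul_norm_sq_mul_maxwellian (n : ℝ) {T : ℝ} (hT : 0 < T)
    (w : EuclideanSpace ℝ ι) :
    ∫ C, ⟪C, w⟫ ^ 2 * (‖C‖ ^ 2 * maxwellian n T C) =
      (Fintype.card ι + 2) * n * T ^ 2 * ‖w‖ ^ 2 := by
  classical
  simp only [inner_eq_sum_mul, EuclideanSpace.real_norm_sq_eq w]
  exact integral_sum_mul_sq_mul (f := fun i (C : EuclideanSpace ℝ ι) => C i)
    (integrable_coord_mul_coord_mul_norm_sq_mul_maxwellian n hT)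
    (integral_coord_mul_coord_mul_norm_sq_mul_maxwellian n hT) _

lemma integrable_norm_sq_mul_maxwellian (n : ℝ) {T : ℝ} (hT : 0 < T) :
    Integrable fun C : EuclideanSpace ℝ ι => ‖C‖ ^ 2 * maxwellian n T C := by
  classical
  simp_rw [EuclideanSpace.real_norm_sq_eq, Finset.sum_mul, sq]
  exact integrable_finsetSum _ fun i _ => integrable_coord_mul_coord_mul_maxwellian n hT i i

lemma integral_norm_sq_mul_maxwellian (n : ℝ) {T : ℝ} (hT : 0 < T) :
    ∫ C : EuclideanSpace ℝ ι, ‖C‖ ^ 2 * maxwellian n T C = Fintype.card ι * n * T := by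
  classical
  simp_rw [EuclideanSpace.real_norm_sq_eq, Finset.sum_mul, sq]
  rw [integral_finsetSum _ fun i _ => integrable_coord_mul_coord_mul_maxwellian n hT i i]
  simp [integral_coord_mul_coord_mul_maxwellian n hT]
  ring

/-- The perturbation `δφ²` of the paper. -/
noncomputable def shiftCorrection (M T : ℝ) (w : EuclideanSpace ℝ ι)
    (φ : EuclideanSpace ℝ ι → ℝ) (C : EuclideanSpace ℝ ι) : ℝ :=
  -(M / T) * ⟪C, w⟫ * φ C + M ^ 2 / (2 * T) * (⟪w, w⟫ + ⟪C, w⟫ ^ 2 / T)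

lemma integral_maxwellian_mul_shiftCorrection (n M : ℝ) {T : ℝ} (hT : 0 < T)
    (w : EuclideanSpace ℝ ι) {φ : EuclideanSpace ℝ ι → ℝ}
    (hφ : Integrable fun C => (maxwellian n T C * φ C) • C) :
    ∫ C, maxwellian n T C * shiftCorrection M T w φ C =
      M / T * ⟪w, (M * n) • w - ∫ C, (maxwellian n T C * φ C) • C⟫ := by
  have hsplit (C : EuclideanSpace ℝ ι) : maxwellian n T C * shiftCorrection M T w φ C =
      -(M / T) * ⟪w, (maxwellian n T C * φ C) • C⟫ +
        (M ^ 2 / (2 * T) * ‖w‖ ^ 2 * maxwellian n T C +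
          M ^ 2 / (2 * T ^ 2) * (⟪C, w⟫ ^ 2 * maxwellian n T C)) := by
    rw [shiftCorrection, real_inner_smul_right, real_inner_comm, real_inner_self_eq_norm_sq]
    field_simp
  have h0 := integrable_maxwellian (ι := ι) n hT
  have h2 := integrable_inner_sq_mul_maxwellian n hT w
  simp only [hsplit]
  rw [integral_add ((hφ.const_inner w).const_mul _) ((h0.const_mul _).fun_add (h2.const_mul _)),
    integral_add (h0.const_mul _) (h2.const_mul _), integral_const_mul, integral_const_mul,
    integral_const_mul, integral_inner hφ, integral_maxwellian n hT,
    integral_inner_sq_mul_maxwellian n hT, inner_sub_right, real_inner_smul_right,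
    real_inner_self_eq_norm_sq]
  field_simp
  ring

lemma integral_maxwellian_mul_shiftCorrection_mul_energy (n M : ℝ) {T : ℝ} (hT : 0 < T)
    (w : EuclideanSpace ℝ ι) {φ : EuclideanSpace ℝ ι → ℝ}
    (hφ : Integrable fun C => (1 / 2 * ‖C‖ ^ 2 * maxwellian n T C * φ C) • C) :
    ∫ C, maxwellian n T C * shiftCorrection M T w φ C * (1 / 2 * ‖C‖ ^ 2) =
      M * ⟪w, ((Fintype.card ι + 1) / 2 * M * n) • w -
        (1 / T) • ∫ C, (1 / 2 * ‖C‖ ^ 2 * maxwellian n T C * φ C) • C⟫ := by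
  have hsplit (C : EuclideanSpace ℝ ι) :
      maxwellian n T C * shiftCorrection M T w φ C * (1 / 2 * ‖C‖ ^ 2) =
        -(M / T) * ⟪w, (1 / 2 * ‖C‖ ^ 2 * maxwellian n T C * φ C) • C⟫ +
          (M ^ 2 / (4 * T) * ‖w‖ ^ 2 * (‖C‖ ^ 2 * maxwellian n T C) +
            M ^ 2 / (4 * T ^ 2) * (⟪C, w⟫ ^ 2 * (‖C‖ ^ 2 * maxwellian n T C))) := by
    rw [shiftCorrection, real_inner_smul_right, real_inner_comm, real_inner_self_eq_norm_sq]
    field_simp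
    ring
  have h2 := integrable_norm_sq_mul_maxwellian (ι := ι) n hT
  have h4 := integrable_inner_sq_mul_norm_sq_mul_maxwellian n hT w
  simp only [hsplit]
  rw [integral_add ((hφ.const_inner w).const_mul _) ((h2.const_mul _).fun_add (h4.const_mul _)),
    integral_add (h2.const_mul _) (h4.const_mul _), integral_const_mul, integral_const_mul,
    integral_const_mul, integral_inner hφ, integral_norm_sq_mul_maxwellian n hT,
    integral_inner_sq_mul_norm_sq_mul_maxwellian n hT, inner_sub_right, real_inner_smul_right,
    real_inner_smul_right, real_inner_self_eq_norm_sq]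
  field_simp
  ring

end Maxwellian

theorem shift_breaks_second_order_constraints_general (T M n : ℝ) (hT : 0 < T) (hM : 0 < M)
    (hn : 0 < n) (w : EuclideanSpace ℝ (Fin 3)) (hw : w ≠ 0)
    (f : EuclideanSpace ℝ (Fin 3) → ℝ)
    (hf : ∀ C, f C = n * (2 * π * T) ^ (-(3 : ℝ) / 2) * Real.exp (-‖C‖ ^ 2 / (2 * T)))
    (φ : EuclideanSpace ℝ (Fin 3) → ℝ)
    (hV_int : Integrable (fun C : EuclideanSpace ℝ (Fin 3) => (f C * φ C) • C))
    (hq_int : Integrable (fun C : EuclideanSpace ℝ (Fin 3) => (1 / 2 * ‖C‖ ^ 2 * f C * φ C) • C))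
    (δφ2 : EuclideanSpace ℝ (Fin 3) → ℝ)
    (hδφ2 : ∀ C, δφ2 C =
      -(M / T) * ⟪C, w⟫ * φ C + M ^ 2 / (2 * T) * (⟪w, w⟫ + ⟪C, w⟫ ^ 2 / T))
    (V q : EuclideanSpace ℝ (Fin 3))
    (hV : V = (1 / n) • ∫ C, (f C * φ C) • C)
    (hq : q = ∫ C, (1 / 2 * ‖C‖ ^ 2 * f C * φ C) • C) :
    (∫ C, f C * δφ2 C) = M / T * n * ⟪w, M • w - V⟫ ∧
    (∫ C, f C * δφ2 C * (1 / 2 * ‖C‖ ^ 2)) = M * ⟪w, (2 * M * n) • w - (1 / T) • q⟫ ∧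
    ¬(M / T * n * ⟪w, M • w⟫ = 0 ∧ M * ⟪w, (2 * M * n) • w⟫ = 0) := by
  obtain rfl : f = maxwellian n T := funext fun C => by simp [hf, maxwellian]
  obtain rfl : δφ2 = shiftCorrection M T w φ := funext hδφ2
  refine ⟨?_, ?_, ?_⟩
  · rw [integral_maxwellian_mul_shiftCorrection n M hT w hV_int, hV, inner_sub_right,
      inner_sub_right, real_inner_smul_right, real_inner_smul_right, real_inner_smul_right]
    field_simp
  · rw [integral_maxwellian_mul_shiftCorrection_mul_energy n M hT w hq_int, ← hq]
    norm_num
  · rintro ⟨h, -⟩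
    have hw' : 0 < ‖w‖ := norm_pos_iff.2 hw
    rw [real_inner_smul_right, real_inner_self_eq_norm_sq] at h
    exact (by positivity : 0 < M / T * n * (M * ‖w‖ ^ 2)).ne' h

/-- A nonzero first-order velocity shift `w` breaks the scalar constraints on the
second-order electron perturbation: with `δφ²(C) = -(M/T)(C·w)φ(C) + (M²/(2T))(w·w + (C·w)²/T)`,
the projections on the collisional invariants are `(M/T) n w·(Mw - V)` and
`M w·(2Mn w - q/T)`, which cannot both vanish for all admissible `φ` unless `w = 0`. -/
theorem shift_breaks_second_order_constraints (T M n : ℝ) (hT : 0 < T) (hM : 0 < M)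
    (hn : 0 < n) (w : EuclideanSpace ℝ (Fin 3)) (hw : w ≠ 0)
    (f : EuclideanSpace ℝ (Fin 3) → ℝ)
    (hf : ∀ C, f C = n * (2 * π * T) ^ (-(3 : ℝ) / 2) * Real.exp (-‖C‖ ^ 2 / (2 * T)))
    (φ : EuclideanSpace ℝ (Fin 3) → ℝ)
    (hφ_int : Integrable (fun C : EuclideanSpace ℝ (Fin 3) => f C * φ C))
    (hφE_int : Integrable (fun C : EuclideanSpace ℝ (Fin 3) => f C * φ C * (1 / 2 * ‖C‖ ^ 2)))
    (hV_int : Integrable (fun C : EuclideanSpace ℝ (Fin 3) => (f C * φ C) • C))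
    (hq_int : Integrable (fun C : EuclideanSpace ℝ (Fin 3) => (1 / 2 * ‖C‖ ^ 2 * f C * φ C) • C))
    (hφ1 : (∫ C, f C * φ C) = 0)
    (hφ2 : (∫ C, f C * φ C * (1 / 2 * ‖C‖ ^ 2)) = 0)
    (δφ2 : EuclideanSpace ℝ (Fin 3) → ℝ)
    (hδφ2 : ∀ C, δφ2 C =
      -(M / T) * ⟪C, w⟫ * φ C + M ^ 2 / (2 * T) * (⟪w, w⟫ + ⟪C, w⟫ ^ 2 / T))
    (V q : EuclideanSpace ℝ (Fin 3))
    (hV : V = (1 / n) • ∫ C, (f C * φ C) • C)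
    (hq : q = ∫ C, (1 / 2 * ‖C‖ ^ 2 * f C * φ C) • C) :
    (∫ C, f C * δφ2 C) = M / T * n * ⟪w, M • w - V⟫ ∧
    (∫ C, f C * δφ2 C * (1 / 2 * ‖C‖ ^ 2)) = M * ⟪w, (2 * M * n) • w - (1 / T) • q⟫ ∧
    ¬(M / T * n * ⟪w, M • w⟫ = 0 ∧ M * ⟪w, (2 * M * n) • w⟫ = 0) :=
  shift_breaks_second_order_constraints_general T M n hT hM hn w hw f hf φ hV_int hq_int δφ2 hδφ2 V
    q hV hq
end

section
/- Let λ ≠ 0 be a real number, V a complex inner product space, L : V → V linear with ⟪u, L u⟫ real for all u, and suppose Φ ∈ V satisfies Im(⟪Ψ, L Φ⟫ + i λ ⟪Ψ, Φ⟫) = 0 for all Ψ in some subspace containing Φ and a second vector Φ'. Writing Φ = Φᵣ + i Φᵢ and Φ' = Φ'ᵣ + i Φ'ᵢ with real and imaginary parts in a real form of V, and letting [x,y] = Re⟪x, L y⟫ (symmetric) and ((x,y)) = λ Re⟪x,y⟫, the four identities [Φᵣ, Φ'ᵢ] + ((Φᵣ, Φ'ᵣ)) = 0, [Φᵢ, Φ'ᵢ]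 + ((Φᵢ, Φ'ᵣ)) = 0, [Φᵢ, Φ'ᵢ] + ((Φᵣ, Φ'ᵢ)) = 0, [Φᵢ, Φ'ᵣ] + ((Φᵣ, Φ'ᵣ)) = 0 imply Im([Φ, Φ']) = 0 and Im(((Φ, Φ'))) = 0 when the brackets are extended sesquilinearly. -/
open scoped ComplexInnerProductSpace

/-- Reality of the mixed transport brackets: with `[x,y] = Re⟪x, L y⟫` and
`((x,y)) = λ Re⟪x,y⟫`, the four identities coming from the imaginary part of the
magnetized integral equations imply that the sesquilinear extensions
`[Φ,Φ'] = [Φᵣ,Φ'ᵣ] + [Φᵢ,Φ'ᵢ] + i([Φᵣ,Φ'ᵢ] - [Φᵢ,Φ'ᵣ])` and the analogous `((Φ,Φ'))`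
have vanishing imaginary parts. -/
theorem mixed_brackets_real {V : Type*} [NormedAddCommGroup V] [InnerProductSpace ℂ V]
    (L : V →ₗ[ℂ] V) (lam : ℝ) (hlam : lam ≠ 0)
    (hLreal : ∀ u : V, (⟪u, L u⟫).im = 0)
    (Φr Φi Φr' Φi' : V)
    (br pr : V → V → ℝ)
    (hbr : ∀ x y, br x y = (⟪x, L y⟫).re)
    (hbr_symm : ∀ x y, br x y = br y x)
    (hpr : ∀ x y, pr x y = lam * (⟪x, y⟫).re)
    (h1 : br Φr Φi' + pr Φr Φr' = 0)
    (h2 : br Φi Φi' + pr Φi Φr' = 0)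
    (h3 : br Φi Φi' + pr Φr Φi' = 0)
    (h4 : br Φi Φr' + pr Φr Φr' = 0) :
    (((br Φr Φr' + br Φi Φi' : ℝ) : ℂ) + (br Φr Φi' - br Φi Φr') * Complex.I).im = 0 ∧
    (((pr Φr Φr' + pr Φi Φi' : ℝ) : ℂ) + (pr Φr Φi' - pr Φi Φr') * Complex.I).im = 0 := by
  constructor <;>
    simp only [Complex.add_im, Complex.ofReal_im, Complex.mul_im, Complex.ofReal_re,
      Complex.I_im, Complex.I_re, Complex.sub_re, mul_one, mul_zero, add_zero, zero_add] <;>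
    linarith
end
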